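/- For every integer $t \ge 2$ and every pair of nonnegative integers $(b,c)$ with $2b+3c = 2^t-3+2^{t-1}$ and $\binom{b+c}{b}$ odd, one has $(b,c) = (0, 2^{t-1}-1)$. Equivalently, $g_{2^t-3+2^{t-1}} = w_3^{2^{t-1}-1}$ in $\mathbb{Z}_2[w_2,w_3]$. -/
import Mathlib


open MvPolynomial Finset

/-- `g r = ∑_{2b+3c=r} C(b+c,b) w₂^b w₃^c` in `ℤ₂[w₂,w₃]` (variable `X 0` is `w₂`, `X 1` is `w₃`). -/
noncomputable def g (r : ℕ) : MvPolynomial (Fin 2) (ZMod 2) :=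
  ∑ b ∈ Finset.range (r + 1), ∑ c ∈ Finset.range (r + 1),
    if 2 * b + 3 * c = r then
      C ((Nat.choose (b + c) b : ZMod 2)) * (X 0) ^ b * (X 1) ^ c
    else 0

lemma lucas2 (n k : ℕ) :
    Nat.choose n k % 2 = (Nat.choose (n % 2) (k % 2) * Nat.choose (n / 2) (k / 2)) % 2 := by
  haveI : Fact (Nat.Prime 2) := ⟨Nat.prime_two⟩
  exact Choose.choose_modEq_choose_mod_mul_choose_div_nat (p := 2)

lemma key : ∀ t, 1 ≤ t → ∀ b c : ℕ, 2 * b + 3 * c = 3 * (2 ^ t - 1) →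
    Nat.choose (b + c) b % 2 = 1 → b = 0 ∧ c = 2 ^ t - 1 := by
  intro t
  induction t with
  | zero => omega
  | succ t ih =>
    intro _ b c heq hodd
    rcases Nat.eq_zero_or_pos t with rfl | ht
    · -- 2b+3c = 3
      have : c = 1 ∧ b = 0 := by omega
      omega
    · have h2 : (2:ℕ) ^ (t+1) = 2 * 2 ^ t := by ring
      have hpt : (2:ℕ) ^ t ≥ 2 := Nat.one_lt_two_pow_iff.mpr (by omega)
      -- c is odd
      have hc : c % 2 = 1 := by omega
      -- b is even
      have hb : b % 2 = 0 := by
        by_contra h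
        have hb1 : b % 2 = 1 := by omega
        have hbc : (b + c) % 2 = 0 := by omega
        rw [lucas2, hbc, hb1] at hodd
        simp [Nat.choose] at hodd
      obtain ⟨b', rfl⟩ : ∃ b', b = 2 * b' := ⟨b / 2, by omega⟩
      obtain ⟨c', rfl⟩ : ∃ c', c = 2 * c' + 1 := ⟨c / 2, by omega⟩
      have heq' : 2 * b' + 3 * c' = 3 * (2 ^ t - 1) := by omega
      have hodd' : Nat.choose (b' + c') b' % 2 = 1 := by
        rw [lucas2] at hodd
        have h1 : (2 * b' + (2 * c' + 1)) % 2 = 1 := by omega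
        have h2 : (2 * b') % 2 = 0 := by omega
        have h3 : (2 * b' + (2 * c' + 1)) / 2 = b' + c' := by omega
        have h4 : (2 * b') / 2 = b' := by omega
        rw [h1, h2, h3, h4] at hodd
        simpa [Nat.choose] using hodd
      obtain ⟨hb0, hc0⟩ := ih ht b' c' heq' hodd'
      constructor
      · omega
      · omega

theorem f_top_eq_pure_w3_power (t : ℕ) (ht : 2 ≤ t) :
    (∀ b c : ℕ, 2 * b + 3 * c = 2 ^ t - 3 + 2 ^ (t - 1) → Odd (Nat.choose (b + c) b) →
      b = 0 ∧ c = 2 ^ (t - 1) - 1) ∧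
    g (2 ^ t - 3 + 2 ^ (t - 1)) = (X 1) ^ (2 ^ (t - 1) - 1) := by
  have ht1 : 1 ≤ t - 1 := by omega
  have h2t : (2:ℕ) ^ t = 2 * 2 ^ (t - 1) := by
    conv_lhs => rw [show t = (t-1) + 1 by omega]
    ring
  have hpt : (2:ℕ) ^ (t - 1) ≥ 2 := Nat.one_lt_two_pow_iff.mpr (by omega)
  have hr3 : 2 ^ t - 3 + 2 ^ (t - 1) = 3 * (2 ^ (t - 1) - 1) := by omega
  have key' : ∀ b c : ℕ, 2 * b + 3 * c = 2 ^ t - 3 + 2 ^ (t - 1) →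
      Nat.choose (b + c) b % 2 = 1 → b = 0 ∧ c = 2 ^ (t - 1) - 1 := by
    intro b c h1 h2
    exact key (t - 1) ht1 b c (by omega) h2
  refine ⟨fun b c h1 h2 => key' b c h1 (Nat.odd_iff.mp h2), ?_⟩
  set m := 2 ^ (t - 1) - 1 with hm
  set r := 2 ^ t - 3 + 2 ^ (t - 1) with hr
  have hmr : m < r + 1 := by omega
  have heven : ∀ b c : ℕ, 2 * b + 3 * c = r → ¬(b = 0 ∧ c = m) →
      ((Nat.choose (b + c) b : ZMod 2)) = 0 := by
    intro b c h1 h2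
    have h3 : Nat.choose (b + c) b % 2 = 0 := by
      by_contra h
      exact h2 (key' b c h1 (by omega))
    calc ((Nat.choose (b + c) b : ℕ) : ZMod 2)
        = ((Nat.choose (b + c) b % 2 : ℕ) : ZMod 2) := by
          exact (ZMod.natCast_mod _ 2).symm
      _ = 0 := by rw [h3]; simp
  rw [g, Finset.sum_eq_single 0]
  · rw [Finset.sum_eq_single m]
    · have hcond : 2 * 0 + 3 * m = r := by omega
      rw [if_pos hcond]
      simp
    · intro c _ hc
      split_ifs with h
      · rw [heven 0 c h (by tauto)]; simp
      · rfl
    · intro h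
      exact absurd (Finset.mem_range.mpr hmr) h
  · intro b _ hb
    apply Finset.sum_eq_zero
    intro c _
    split_ifs with h
    · rw [heven b c h (by tauto)]; simp
    · rfl
  · intro h
    exact absurd (Finset.mem_range.mpr (by omega)) h
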